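/- arXiv:1404.6991 — 6 statements merged into one kernel-verified Lean document; each statement's English description precedes it below -/
import Mathlib

section
/- Let φ : [0,∞)² → [0,∞) be continuous, strictly increasing in each variable, with φ(0,0)=0, φ(1,0)=φ(0,1)=1. Let aⱼ → a and bⱼ → b be sequences of positive reals converging to positive limits, and let cⱼ, c > 0 satisfy φ(cⱼ/aⱼ, cⱼ/bⱼ) = 1 and φ(c/a, c/b) = 1 for all j. Then cⱼ → c as j → ∞. -/
/-- The class `Φ̃₂`: continuous on `[0,∞)²`, strictly increasing in each variable,
with `φ(0,0) = 0` and `φ(1,0) = φ(0,1) = 1`. -/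
def IsPhi2 (φ : ℝ → ℝ → ℝ) : Prop :=
  ContinuousOn (fun p : ℝ × ℝ => φ p.1 p.2) (Set.Ici 0 ×ˢ Set.Ici 0) ∧
  (∀ y : ℝ, 0 ≤ y → StrictMonoOn (fun x => φ x y) (Set.Ici 0)) ∧
  (∀ x : ℝ, 0 ≤ x → StrictMonoOn (fun y => φ x y) (Set.Ici 0)) ∧
  φ 0 0 = 0 ∧ φ 1 0 = 1 ∧ φ 0 1 = 1

theorem orlicz_combination_continuous (φ : ℝ → ℝ → ℝ) (hφ : IsPhi2 φ)
    (a b c : ℝ) (ha : 0 < a) (hb : 0 < b) (hc : 0 < c)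
    (aj bj cj : ℕ → ℝ) (haj : ∀ j, 0 < aj j) (hbj : ∀ j, 0 < bj j)
    (hcj : ∀ j, 0 < cj j)
    (hconva : Filter.Tendsto aj Filter.atTop (nhds a))
    (hconvb : Filter.Tendsto bj Filter.atTop (nhds b))
    (hj : ∀ j, φ (cj j / aj j) (cj j / bj j) = 1)
    (h : φ (c / a) (c / b) = 1) :
    Filter.Tendsto cj Filter.atTop (nhds c) := by
  obtain ⟨hcont, hmx, hmy, -, -, -⟩ := hφ
  -- strict monotonicity of t ↦ φ (t/a') (t/b')
  have mono : ∀ (a' b' : ℝ), 0 < a' → 0 < b' → ∀ s t : ℝ, 0 ≤ s → s < t →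
      φ (s / a') (s / b') < φ (t / a') (t / b') := by
    intro a' b' ha' hb' s t hs hst
    have ht0 : 0 ≤ t := hs.trans hst.le
    calc φ (s / a') (s / b') < φ (t / a') (s / b') :=
          hmx (s / b') (div_nonneg hs hb'.le) (div_nonneg hs ha'.le)
            (div_nonneg ht0 ha'.le) ((div_lt_div_iff_of_pos_right ha').2 hst)
      _ < φ (t / a') (t / b') :=
          hmy (t / a') (div_nonneg ht0 ha'.le) (div_nonneg hs hb'.le)
            (div_nonneg ht0 hb'.le) ((div_lt_div_iff_of_pos_right hb').2 hst)
  have mono_le : ∀ (a' b' : ℝ), 0 < a' → 0 < b' → ∀ s t : ℝ, 0 ≤ s → s ≤ t →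
      φ (s / a') (s / b') ≤ φ (t / a') (t / b') := by
    intro a' b' ha' hb' s t hs hst
    rcases hst.eq_or_lt with rfl | hlt
    · exact le_rfl
    · exact (mono a' b' ha' hb' s t hs hlt).le
  -- continuity along the sequences
  have contx : ∀ x : ℝ, 0 ≤ x →
      Filter.Tendsto (fun j => φ (x / aj j) (x / bj j)) Filter.atTop
        (nhds (φ (x / a) (x / b))) := by
    intro x hx0
    have hmem : ((x / a, x / b) : ℝ × ℝ) ∈ Set.Ici (0:ℝ) ×ˢ Set.Ici (0:ℝ) :=
      ⟨div_nonneg hx0 ha.le, div_nonneg hx0 hb.le⟩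
    have h1 : Filter.Tendsto (fun j => ((x / aj j, x / bj j) : ℝ × ℝ)) Filter.atTop
        (nhdsWithin (x / a, x / b) (Set.Ici 0 ×ˢ Set.Ici 0)) := by
      rw [tendsto_nhdsWithin_iff]
      refine ⟨Filter.Tendsto.prodMk_nhds ?_ ?_, Filter.Eventually.of_forall fun j =>
        ⟨div_nonneg hx0 (haj j).le, div_nonneg hx0 (hbj j).le⟩⟩
      · exact Filter.Tendsto.div tendsto_const_nhds hconva ha.ne'
      · exact Filter.Tendsto.div tendsto_const_nhds hconvb hb.ne'
    exact ((hcont _ hmem).tendsto).comp h1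
  rw [tendsto_order]
  constructor
  · intro x hxc
    rcases lt_or_ge x 0 with hneg | hx0
    · exact Filter.Eventually.of_forall fun j => hneg.trans (hcj j)
    · have hlt : φ (x / a) (x / b) < 1 := h ▸ mono a b ha hb x c hx0 hxc
      filter_upwards [(contx x hx0).eventually_lt_const hlt] with j hjlt
      by_contra h'
      push_neg at h'
      have := mono_le (aj j) (bj j) (haj j) (hbj j) (cj j) x (hcj j).le h'
      rw [hj j] at this
      exact absurd (this.trans_lt hjlt) (lt_irrefl 1)
  · intro x hcx
    have hx0 : (0:ℝ) ≤ x := (hc.trans hcx).le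
    have hlt : 1 < φ (x / a) (x / b) := h ▸ mono a b ha hb c x hc.le hcx
    filter_upwards [(contx x hx0).eventually_const_lt hlt] with j hjlt
    by_contra h'
    push_neg at h'
    have := mono_le (aj j) (bj j) (haj j) (hbj j) x (cj j) hx0 h'
    rw [hj j] at this
    exact absurd (hjlt.trans_le this) (lt_irrefl 1)
end

section
/- Let K, L be star bodies in ℝⁿ about the origin (with continuous positive radial functions ρ_K, ρ_L on the unit sphere S^{n-1}), and let φ : [0,∞)² → [0,∞) be continuous, strictly increasing in each variable, with φ(0,0)=0, φ(1,0)=φ(0,1)=1. Then there exists a unique star body K +̃_φ L whose radial function ρ satisfies φ(ρ(u)/ρ_K(u), ρ(u)/ρ_L(u)) = 1 for all u ∈ S^{n-1}; in particular ρ is continuous and positive on S^{n-1}. -/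
noncomputable section

open Metric Set MeasureTheory Filter

/-- A star body about the origin in `ℝⁿ`, represented by its radial function,
which is continuous and positive on the unit sphere. -/
structure StarBody (n : ℕ) where
  ρ : EuclideanSpace ℝ (Fin n) → ℝ
  pos : ∀ u : EuclideanSpace ℝ (Fin n), ‖u‖ = 1 → 0 < ρ u
  cont : ContinuousOn ρ (sphere (0 : EuclideanSpace ℝ (Fin n)) 1)

/-- `M` is the Orlicz `φ`-radial addition `K +̃_φ L`, i.e.
`φ(ρ_M(u)/ρ_K(u), ρ_M(u)/ρ_L(u)) = 1` for all `u` on the unit sphere. -/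
def IsOrliczSum {n : ℕ} (φ : ℝ → ℝ → ℝ) (K L M : StarBody n) : Prop :=
  ∀ u : EuclideanSpace ℝ (Fin n), ‖u‖ = 1 →
    φ (M.ρ u / K.ρ u) (M.ρ u / L.ρ u) = 1

/-!
Along each direction `u`, the function `t ↦ φ(t/ρ_K(u), t/ρ_L(u))` is continuous and strictly
increasing on `[0, ∞)`, equal to `0` at `t = 0` and exceeding `1` at `t = ρ_K(u)`; so it takes the
value `1` exactly once, at some `ρ(u) > 0`. Continuity of `ρ` comes from the strict monotonicity:
`a < ρ(u) < b` is equivalent to `φ(a/ρ_K(u), a/ρ_L(u)) < 1 < φ(b/ρ_K(u), b/ρ_L(u))`, an open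
condition in `u`.
-/

theorem continuous_of_strictMonoOn_of_eq {X : Type*} [TopologicalSpace X] {g : X → ℝ → ℝ}
    {r : X → ℝ} {c : ℝ} (hmono : ∀ x, StrictMonoOn (g x) (Ici 0))
    (hcont : ∀ t, 0 ≤ t → Continuous fun x => g x t) (hr : ∀ x, 0 ≤ r x)
    (hroot : ∀ x, g x (r x) = c) : Continuous r := by
  refine continuous_iff_continuousAt.2 fun x₀ => tendsto_order.2 ⟨fun a ha => ?_, fun b hb => ?_⟩
  · rcases lt_or_ge a 0 with ha0 | ha0
    · exact Eventually.of_forall fun x => ha0.trans_le (hr x)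
    · have hlt : g x₀ a < c := hroot x₀ ▸ hmono x₀ ha0 (hr x₀) ha
      filter_upwards [(hcont a ha0).continuousAt.eventually_lt continuousAt_const hlt] with x hx
      exact ((hmono x).lt_iff_lt ha0 (hr x)).1 (hroot x ▸ hx)
  · have hb0 : 0 ≤ b := (hr x₀).trans hb.le
    have hlt : c < g x₀ b := hroot x₀ ▸ hmono x₀ (hr x₀) hb0 hb
    filter_upwards [continuousAt_const.eventually_lt (hcont b hb0).continuousAt hlt] with x hx
    exact ((hmono x).lt_iff_lt (hr x) hb0).1 (hroot x ▸ hx)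

namespace IsPhi2

variable {φ : ℝ → ℝ → ℝ} {a b : ℝ}

theorem strictMonoOn_div (hφ : IsPhi2 φ) (ha : 0 < a) (hb : 0 < b) :
    StrictMonoOn (fun t => φ (t / a) (t / b)) (Ici 0) := by
  intro s (hs : 0 ≤ s) t (ht : 0 ≤ t) hst
  calc φ (s / a) (s / b) < φ (t / a) (s / b) :=
        hφ.2.1 _ (by positivity) (by positivity : 0 ≤ s / a) (by positivity : 0 ≤ t / a)
          (by gcongr)
    _ < φ (t / a) (t / b) :=
        hφ.2.2.1 _ (by positivity) (by positivity : 0 ≤ s / b) (by positivity : 0 ≤ t / b)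
          (by gcongr)

theorem continuousOn_div (hφ : IsPhi2 φ) (ha : 0 < a) (hb : 0 < b) :
    ContinuousOn (fun t => φ (t / a) (t / b)) (Ici 0) :=
  hφ.1.comp ((continuous_id.div_const _).prodMk (continuous_id.div_const _)).continuousOn
    fun _ (ht : (0 : ℝ) ≤ _) => ⟨div_nonneg ht ha.le, div_nonneg ht hb.le⟩

theorem continuous_comp_div {X : Type*} [TopologicalSpace X] (hφ : IsPhi2 φ) {f g : X → ℝ}
    (hf : Continuous f) (hg : Continuous g) (hf0 : ∀ x, 0 < f x) (hg0 : ∀ x, 0 < g x) {t : ℝ}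
    (ht : 0 ≤ t) : Continuous fun x => φ (t / f x) (t / g x) :=
  hφ.1.comp_continuous
    ((continuous_const.div hf fun x => (hf0 x).ne').prodMk
      (continuous_const.div hg fun x => (hg0 x).ne'))
    fun x => ⟨div_nonneg ht (hf0 x).le, div_nonneg ht (hg0 x).le⟩

theorem exists_pos_div_eq_one (hφ : IsPhi2 φ) (ha : 0 < a) (hb : 0 < b) :
    ∃ t, 0 < t ∧ φ (t / a) (t / b) = 1 := by
  obtain ⟨hmono₂, h00, h10, -⟩ := hφ.2.2
  have hzero : φ (0 / a) (0 / b) = 0 := by simp [h00]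
  have hone : 1 < φ (a / a) (a / b) := by
    rw [div_self ha.ne']
    calc 1 = φ 1 0 := h10.symm
      _ < φ 1 (a / b) := hmono₂ 1 zero_le_one self_mem_Ici (div_pos ha hb).le (div_pos ha hb)
  obtain ⟨t, ht, hteq⟩ := intermediate_value_Icc ha.le
    ((hφ.continuousOn_div ha hb).mono Icc_subset_Ici_self)
    (show (1 : ℝ) ∈ Icc (φ (0 / a) (0 / b)) (φ (a / a) (a / b)) from
      ⟨hzero.trans_le zero_le_one, hone.le⟩)
  refine ⟨t, ht.1.lt_of_ne ?_, hteq⟩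
  rintro rfl
  exact zero_ne_one (hzero.symm.trans hteq)

end IsPhi2

namespace StarBody

variable {n : ℕ} (K : StarBody n)

theorem pos_of_mem_sphere (u : sphere (0 : EuclideanSpace ℝ (Fin n)) 1) : 0 < K.ρ u :=
  K.pos u (mem_sphere_zero_iff_norm.1 u.2)

theorem continuous_restrict_sphere :
    Continuous fun u : sphere (0 : EuclideanSpace ℝ (Fin n)) 1 => K.ρ u :=
  K.cont.domRestrict

end StarBody

/-- Existence and uniqueness of the Orlicz `φ`-radial addition `K +̃_φ L`. -/
theorem orlicz_radial_sum_exists_unique {n : ℕ} (φ : ℝ → ℝ → ℝ) (hφ : IsPhi2 φ)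
    (K L : StarBody n) :
    ∃! ρ : sphere (0 : EuclideanSpace ℝ (Fin n)) 1 → ℝ,
      Continuous ρ ∧ ∀ u : sphere (0 : EuclideanSpace ℝ (Fin n)) 1,
        0 < ρ u ∧ φ (ρ u / K.ρ u) (ρ u / L.ρ u) = 1 := by
  have hmono u := hφ.strictMonoOn_div (K.pos_of_mem_sphere u) (L.pos_of_mem_sphere u)
  choose ρ hρ_pos hρ_eq using fun u =>
    hφ.exists_pos_div_eq_one (K.pos_of_mem_sphere u) (L.pos_of_mem_sphere u)
  have hρ_cont : Continuous ρ :=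
    continuous_of_strictMonoOn_of_eq hmono
      (fun _ ht => hφ.continuous_comp_div K.continuous_restrict_sphere
        L.continuous_restrict_sphere K.pos_of_mem_sphere L.pos_of_mem_sphere ht)
      (fun u => (hρ_pos u).le) hρ_eq
  refine ⟨ρ, ⟨hρ_cont, fun u => ⟨hρ_pos u, hρ_eq u⟩⟩, ?_⟩
  rintro σ ⟨-, hσ⟩
  funext u
  exact (hmono u).injOn (hσ u).1.le (hρ_pos u).le ((hσ u).2.trans (hρ_eq u).symm)
end
end

section
/- Let Kⱼ → K and Lⱼ → L be sequences of star bodies in ℝⁿ converging in the radial metric d_ρ(A,B) = sup_{u ∈ S^{n-1}} |ρ_A(u) − ρ_B(u)|, and let φ ∈ Φ̃₂. Then Kⱼ +̃_φ Lⱼ → K +̃_φ L in the radial metric. -/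
noncomputable section

open Metric Set MeasureTheory Filter

lemma phi_comp (φ : ℝ → ℝ → ℝ) (hφ : IsPhi2 φ) {a b a' b' t t' : ℝ}
    (ha : 0 < a) (hb : 0 < b) (ha' : 0 < a') (hb' : 0 < b')
    (ht : 0 < t) (ht' : 0 < t') (haa : a ≤ a') (hbb : b ≤ b')
    (h1 : φ (t / a) (t / b) = 1) (h2 : φ (t' / a') (t' / b') = 1) : t ≤ t' := by
  by_contra hc
  push_neg at hc
  obtain ⟨-, hx, hy, -⟩ := hφ
  have m1 : φ (t' / a') (t' / b') < φ (t / a') (t' / b') :=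
    hx (t' / b') (by positivity) (Set.mem_Ici.mpr (by positivity))
      (Set.mem_Ici.mpr (by positivity)) (by gcongr)
  have m2 : φ (t / a') (t' / b') ≤ φ (t / a') (t / b') :=
    (hy (t / a') (by positivity)).monotoneOn (Set.mem_Ici.mpr (by positivity))
      (Set.mem_Ici.mpr (by positivity)) (by gcongr)
  have m3 : φ (t / a') (t / b') ≤ φ (t / a) (t / b') :=
    (hx (t / b') (by positivity)).monotoneOn (Set.mem_Ici.mpr (by positivity))
      (Set.mem_Ici.mpr (by positivity)) (by gcongr)
  have m4 : φ (t / a) (t / b') ≤ φ (t / a) (t / b) :=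
    (hy (t / a) (by positivity)).monotoneOn (Set.mem_Ici.mpr (by positivity))
      (Set.mem_Ici.mpr (by positivity)) (by gcongr)
  linarith


lemma sandwich {r r' m lam δ : ℝ} (hr : 0 < r) (hmr : m ≤ r) (hlam : 1 < lam)
    (hδ : δ = (lam - 1) / lam * m) (h : |r - r'| < δ) : r / lam ≤ r' ∧ r' ≤ lam * r := by
  have hl0 : (0:ℝ) < lam := by linarith
  have h0 : (0:ℝ) ≤ (lam - 1) / lam := div_nonneg (by linarith) hl0.le
  have hd : δ ≤ (lam - 1) / lam * r := hδ.le.trans (mul_le_mul_of_nonneg_left hmr h0)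
  have heq : r - (lam - 1) / lam * r = r / lam := by field_simp; ring
  have hd2 : (lam - 1) / lam * r ≤ (lam - 1) * r :=
    mul_le_mul_of_nonneg_right (div_le_self (by linarith) (by linarith : (1:ℝ) ≤ lam)) hr.le
  rw [abs_lt] at h
  constructor
  · linarith
  · linarith

/-- Continuity of the Orlicz radial addition with respect to the radial metric:
if `Kⱼ → K` and `Lⱼ → L` uniformly on the sphere, then `Kⱼ +̃_φ Lⱼ → K +̃_φ L`. -/
theorem orlicz_radial_sum_continuous {n : ℕ} (φ : ℝ → ℝ → ℝ) (hφ : IsPhi2 φ)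
    (K L : StarBody n) (Kj Lj : ℕ → StarBody n) (Mj : ℕ → StarBody n) (M : StarBody n)
    (hK : TendstoUniformlyOn (fun j => (Kj j).ρ) K.ρ atTop
      (sphere (0 : EuclideanSpace ℝ (Fin n)) 1))
    (hL : TendstoUniformlyOn (fun j => (Lj j).ρ) L.ρ atTop
      (sphere (0 : EuclideanSpace ℝ (Fin n)) 1))
    (hMj : ∀ j, IsOrliczSum φ (Kj j) (Lj j) (Mj j))
    (hM : IsOrliczSum φ K L M) :
    TendstoUniformlyOn (fun j => (Mj j).ρ) M.ρ atTop
      (sphere (0 : EuclideanSpace ℝ (Fin n)) 1) := by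
  rcases (sphere (0 : EuclideanSpace ℝ (Fin n)) 1).eq_empty_or_nonempty with hS | hS
  · rw [hS]; exact tendstoUniformlyOn_empty
  have hcomp : IsCompact (sphere (0 : EuclideanSpace ℝ (Fin n)) 1) := isCompact_sphere _ _
  obtain ⟨uM, huM, hmaxM⟩ := hcomp.exists_isMaxOn hS M.cont
  obtain ⟨uK, huK, hminK⟩ := hcomp.exists_isMinOn hS K.cont
  obtain ⟨uL, huL, hminL⟩ := hcomp.exists_isMinOn hS L.cont
  set C : ℝ := M.ρ uM with hC
  set m : ℝ := min (K.ρ uK) (L.ρ uL) with hm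
  have hC0 : 0 < C := M.pos uM (mem_sphere_zero_iff_norm.mp huM)
  have hm0 : 0 < m := lt_min (K.pos uK (mem_sphere_zero_iff_norm.mp huK))
    (L.pos uL (mem_sphere_zero_iff_norm.mp huL))
  rw [Metric.tendstoUniformlyOn_iff] at hK hL ⊢
  intro ε hε
  set lam : ℝ := 1 + ε / (2 * C) with hlam
  have hlam1 : 1 < lam := by
    have h1 : 0 < ε / (2 * C) := by positivity
    rw [hlam]; linarith
  have hlam0 : 0 < lam := by linarith
  set δ : ℝ := (lam - 1) / lam * m with hδ
  have hδ0 : 0 < δ := by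
    rw [hδ]; exact mul_pos (div_pos (by linarith) hlam0) hm0
  clear_value C m lam δ
  filter_upwards [hK δ hδ0, hL δ hδ0] with j hKj hLj u hu
  have hu1 : ‖u‖ = 1 := mem_sphere_zero_iff_norm.mp hu
  have hKu : 0 < K.ρ u := K.pos u hu1
  have hLu : 0 < L.ρ u := L.pos u hu1
  have hMu : 0 < M.ρ u := M.pos u hu1
  have hKju : 0 < (Kj j).ρ u := (Kj j).pos u hu1
  have hLju : 0 < (Lj j).ρ u := (Lj j).pos u hu1
  have hMju : 0 < (Mj j).ρ u := (Mj j).pos u hu1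
  have hmK : m ≤ K.ρ u := by rw [hm]; exact le_trans (min_le_left _ _) (hminK hu)
  have hmL : m ≤ L.ρ u := by rw [hm]; exact le_trans (min_le_right _ _) (hminL hu)
  have hMC : M.ρ u ≤ C := by rw [hC]; exact hmaxM hu
  have hdK : |K.ρ u - (Kj j).ρ u| < δ := by
    have := hKj u hu; rwa [Real.dist_eq] at this
  have hdL : |L.ρ u - (Lj j).ρ u| < δ := by
    have := hLj u hu; rwa [Real.dist_eq] at this
  obtain ⟨hKlo, hKup⟩ := sandwich hKu hmK hlam1 hδ hdK
  obtain ⟨hLlo, hLup⟩ := sandwich hLu hmL hlam1 hδ hdL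
  have heq1 : φ (lam * M.ρ u / (lam * K.ρ u)) (lam * M.ρ u / (lam * L.ρ u)) = 1 := by
    rw [mul_div_mul_left _ _ (ne_of_gt hlam0), mul_div_mul_left _ _ (ne_of_gt hlam0)]
    exact hM u hu1
  have hup : (Mj j).ρ u ≤ lam * M.ρ u :=
    phi_comp φ hφ hKju hLju (by positivity) (by positivity) hMju (by positivity)
      hKup hLup (hMj j u hu1) heq1
  have heq2 : φ (M.ρ u / lam / (K.ρ u / lam)) (M.ρ u / lam / (L.ρ u / lam)) = 1 := by
    have e1 : M.ρ u / lam / (K.ρ u / lam) = M.ρ u / K.ρ u := by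
      rw [div_div_div_comm, div_self hlam0.ne', div_one]
    have e2 : M.ρ u / lam / (L.ρ u / lam) = M.ρ u / L.ρ u := by
      rw [div_div_div_comm, div_self hlam0.ne', div_one]
    rw [e1, e2]; exact hM u hu1
  have hlo : M.ρ u / lam ≤ (Mj j).ρ u :=
    phi_comp φ hφ (by positivity) (by positivity) hKju hLju (by positivity) hMju
      hKlo hLlo heq2 (hMj j u hu1)
  have hlamC : (lam - 1) * C = ε / 2 := by
    rw [hlam]; field_simp; ring
  have hprod : (lam - 1) * M.ρ u ≤ (lam - 1) * C :=
    mul_le_mul_of_nonneg_left hMC (by linarith)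
  have hdiveq : M.ρ u - (lam - 1) / lam * M.ρ u = M.ρ u / lam := by field_simp; ring
  have hdiv2 : (lam - 1) / lam * M.ρ u ≤ (lam - 1) * M.ρ u :=
    mul_le_mul_of_nonneg_right (div_le_self (by linarith) hlam1.le) hMu.le
  have e : (lam - 1) * M.ρ u = lam * M.ρ u - M.ρ u := by ring
  rw [Real.dist_eq, abs_lt]
  constructor
  · linarith
  · linarith
end
end

section
/- If in the dual Orlicz-Brunn-Minkowski inequality the function F_φ(x₁,x₂) = φ(x₁^{-1/n}, x₂^{-1/n}) is strictly convex, then equality φ( (|K +̃_φ L|/|K|)^{1/n}, (|K +̃_φ L|/|L|)^{1/n} ) = 1 holds if and only if K and L are dilates of each other (L = λK for some λ > 0). -/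
noncomputable section

open Metric Set MeasureTheory Filter

/-- The spherical Lebesgue measure on the unit sphere `S^{n-1}`. -/
def sphereMeasure (n : ℕ) : Measure (sphere (0 : EuclideanSpace ℝ (Fin n)) 1) :=
  (volume : Measure (EuclideanSpace ℝ (Fin n))).toSphere

/-- The volume of a star body via the polar coordinate formula
`|K| = (1/n) ∫_{S^{n-1}} ρ_K(u)ⁿ dσ(u)`. -/
def StarBody.vol {n : ℕ} (K : StarBody n) : ℝ :=
  (1 / (n : ℝ)) * ∫ u : sphere (0 : EuclideanSpace ℝ (Fin n)) 1,
    (K.ρ u) ^ n ∂(sphereMeasure n)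

/-!
Let `ν = ρ_M^n dσ` and `x(u) = ((ρ_K(u)/ρ_M(u))^n, (ρ_L(u)/ρ_M(u))^n)`. The defining equation of
`M = K +̃_φ L` says `F_φ(x(u)) = 1` for every `u`, while the `ν`-average of `x` is
`(|K|/|M|, |L|/|M|)`, at which `F_φ` takes the value on the left of the equation. Jensen's
inequality for the convex `F_φ` therefore bounds that value by `1`, and for strictly convex `F_φ`
equality forces `x` to be constant (`ν`-a.e., hence everywhere by continuity), i.e. `ρ_K`, `ρ_L`,
`ρ_M` are proportional. Conversely, if `L = λK` then `t ↦ φ(t, t/λ)` is strictly increasing, so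
`ρ_M/ρ_K` is constant and `x` is constant too.
-/

open scoped ENNReal

section Jensen

variable {X E : Type*} [NormedAddCommGroup E] [NormedSpace ℝ E]

theorem Continuous.exists_pos_forall_le [TopologicalSpace X] [CompactSpace X] {h : X → ℝ}
    (hh : Continuous h) (hpos : ∀ x, 0 < h x) : ∃ m, 0 < m ∧ ∀ x, m ≤ h x := by
  cases isEmpty_or_nonempty X
  · exact ⟨1, one_pos, isEmptyElim⟩
  obtain ⟨x₀, -, hx₀⟩ := isCompact_univ.exists_isMinOn univ_nonempty hh.continuousOn
  exact ⟨h x₀, hpos x₀, fun x => hx₀ (mem_univ x)⟩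

variable [MeasurableSpace X] {μ : Measure X}

theorem average_withDensity_ofReal_inv_smul {w : X → ℝ} (hw : Integrable w μ)
    (hw₀ : ∀ x, 0 < w x) (f : X → E) :
    ⨍ x, (w x)⁻¹ • f x ∂μ.withDensity (fun x => ENNReal.ofReal (w x)) =
      (∫ x, w x ∂μ)⁻¹ • ∫ x, f x ∂μ := by
  have hmass : (μ.withDensity fun x => ENNReal.ofReal (w x)).real univ = ∫ x, w x ∂μ := by
    rw [measureReal_def, withDensity_apply _ .univ, Measure.restrict_univ,
      ← ofReal_integral_eq_lintegral_ofReal hw (ae_of_all _ fun x => (hw₀ x).le),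
      ENNReal.toReal_ofReal (integral_nonneg fun x => (hw₀ x).le)]
  rw [average_eq, hmass, integral_withDensity_eq_integral_toReal_smul₀
    hw.aemeasurable.ennreal_ofReal (ae_of_all _ fun _ => ENNReal.ofReal_lt_top)]
  congr 2 with x
  rw [ENNReal.toReal_ofReal (hw₀ x).le, smul_smul, mul_inv_cancel₀ (hw₀ x).ne', one_smul]

variable [TopologicalSpace X]

theorem isOpenPosMeasure_withDensity [μ.IsOpenPosMeasure] {w : X → ℝ≥0∞}
    (hw : AEMeasurable w μ) (hw₀ : ∀ x, w x ≠ 0) : (μ.withDensity w).IsOpenPosMeasure :=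
  ⟨fun U hU hne => by
    simpa [withDensity_apply_eq_zero' hw, hw₀] using hU.measure_ne_zero μ hne⟩

theorem StrictConvexOn.eq_average_of_average_le [CompleteSpace E] [OpensMeasurableSpace X]
    [IsFiniteMeasure μ] [μ.IsOpenPosMeasure] {s : Set E} {g : E → ℝ} {f : X → E}
    (hg : StrictConvexOn ℝ s g) (hgc : ContinuousOn g s) (hsc : IsClosed s) (hf : Continuous f)
    (hfs : ∀ x, f x ∈ s) (hfi : Integrable f μ) (hgi : Integrable (g ∘ f) μ)
    (h : ⨍ x, g (f x) ∂μ ≤ g (⨍ x, f x ∂μ)) : f = fun _ => ⨍ x, f x ∂μ :=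
  (hf.ae_eq_iff_eq μ continuous_const).mp <|
    (hg.ae_eq_const_or_map_average_lt hgc hsc (ae_of_all _ hfs) hfi hgi).resolve_right h.not_gt

end Jensen

theorem Real.rpow_neg_one_div {x : ℝ} (hx : 0 ≤ x) (n : ℕ) :
    x ^ (-(1 : ℝ) / n) = x⁻¹ ^ ((1 : ℝ) / n) := by
  rw [neg_div, Real.rpow_neg hx, Real.inv_rpow hx]

theorem IsPhi2.strictMonoOn_mul {φ : ℝ → ℝ → ℝ} (hφ : IsPhi2 φ) {c : ℝ} (hc : 0 ≤ c) :
    StrictMonoOn (fun t => φ t (c * t)) (Ici 0) := by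
  intro a ha b hb hab
  calc φ a (c * a) < φ b (c * a) := hφ.2.1 _ (mul_nonneg hc ha) ha hb hab
    _ ≤ φ b (c * b) := (hφ.2.2.1 b hb).monotoneOn (mul_nonneg hc ha) (mul_nonneg hc hb)
      (mul_le_mul_of_nonneg_left hab.le hc)

/-- The function `F_φ` of the paper. -/
def orliczF (φ : ℝ → ℝ → ℝ) (n : ℕ) (p : ℝ × ℝ) : ℝ :=
  φ (p.1 ^ (-(1 : ℝ) / n)) (p.2 ^ (-(1 : ℝ) / n))

theorem orliczF_of_nonneg (φ : ℝ → ℝ → ℝ) (n : ℕ) {p : ℝ × ℝ} (h₁ : 0 ≤ p.1) (h₂ : 0 ≤ p.2) :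
    orliczF φ n p = φ (p.1⁻¹ ^ ((1 : ℝ) / n)) (p.2⁻¹ ^ ((1 : ℝ) / n)) := by
  rw [orliczF, Real.rpow_neg_one_div h₁, Real.rpow_neg_one_div h₂]

theorem IsPhi2.continuousOn_orliczF {φ : ℝ → ℝ → ℝ} (hφ : IsPhi2 φ) (n : ℕ) :
    ContinuousOn (orliczF φ n) (Ioi 0 ×ˢ Ioi 0) := by
  refine hφ.1.comp (.prodMk ?_ ?_) fun p hp => ⟨?_, ?_⟩
  · exact continuousOn_fst.rpow_const fun p hp => .inl hp.1.ne'
  · exact continuousOn_snd.rpow_const fun p hp => .inl hp.2.ne'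
  · exact Real.rpow_nonneg (le_of_lt hp.1) _
  · exact Real.rpow_nonneg (le_of_lt hp.2) _

instance (n : ℕ) : IsFiniteMeasure (sphereMeasure n) :=
  inferInstanceAs (IsFiniteMeasure (volume : Measure (EuclideanSpace ℝ (Fin n))).toSphere)

instance (n : ℕ) : (sphereMeasure n).IsOpenPosMeasure :=
  inferInstanceAs (volume : Measure (EuclideanSpace ℝ (Fin n))).toSphere.IsOpenPosMeasure

theorem nonempty_sphere_euclideanSpace {n : ℕ} (hn : 0 < n) :
    Nonempty (sphere (0 : EuclideanSpace ℝ (Fin n)) 1) :=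
  have : Nontrivial (EuclideanSpace ℝ (Fin n)) :=
    Module.nontrivial_of_finrank_pos (R := ℝ) (by rwa [finrank_euclideanSpace_fin])
  (NormedSpace.sphere_nonempty.mpr zero_le_one).to_subtype

namespace StarBody

variable {n : ℕ}

local notation "𝕊" => sphere (0 : EuclideanSpace ℝ (Fin n)) 1

variable (K L M : StarBody n)

theorem continuous_ρ : Continuous fun u : 𝕊 => K.ρ u := K.cont.domRestrict

theorem ρ_pos (u : 𝕊) : 0 < K.ρ u := K.pos u (norm_eq_of_mem_sphere u)

theorem integrable_ρ_pow : Integrable (fun u : 𝕊 => K.ρ u ^ n) (sphereMeasure n) :=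
  (K.continuous_ρ.pow n).integrable_of_hasCompactSupport (.of_compactSpace _)

theorem vol_pos (hn : 0 < n) : 0 < K.vol := by
  have := nonempty_sphere_euclideanSpace hn
  have hpow (u : 𝕊) : 0 < K.ρ u ^ n := pow_pos (K.ρ_pos u) n
  exact mul_pos (by positivity) <|
    (K.continuous_ρ.pow n).integral_pos_of_hasCompactSupport_nonneg_nonzero (.of_compactSpace _)
      (fun u => (hpow u).le) (hpow (Classical.arbitrary _)).ne'

def radialVolumeMeasure : Measure 𝕊 :=
  (sphereMeasure n).withDensity fun u => ENNReal.ofReal (M.ρ u ^ n)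

instance : IsFiniteMeasure M.radialVolumeMeasure :=
  isFiniteMeasure_withDensity_ofReal M.integrable_ρ_pow.2

instance : M.radialVolumeMeasure.IsOpenPosMeasure :=
  isOpenPosMeasure_withDensity (M.continuous_ρ.pow n).measurable.ennreal_ofReal.aemeasurable
    fun u => (ENNReal.ofReal_pos.2 (pow_pos (M.ρ_pos u) n)).ne'

def radialRatios (u : 𝕊) : ℝ × ℝ :=
  ((K.ρ u / M.ρ u) ^ n, (L.ρ u / M.ρ u) ^ n)

theorem continuous_radialRatios : Continuous (radialRatios K L M) :=
  ((K.continuous_ρ.div M.continuous_ρ fun u => (M.ρ_pos u).ne').pow n).prodMk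
    ((L.continuous_ρ.div M.continuous_ρ fun u => (M.ρ_pos u).ne').pow n)

theorem average_radialRatios (hn : 0 < n) :
    ⨍ u, radialRatios K L M u ∂M.radialVolumeMeasure = (K.vol / M.vol, L.vol / M.vol) := by
  have hratios : radialRatios K L M = fun u : 𝕊 => (M.ρ u ^ n)⁻¹ • (K.ρ u ^ n, L.ρ u ^ n) := by
    ext u <;> simp [radialRatios, div_pow, inv_mul_eq_div]
  have hvol (A : StarBody n) : A.vol / M.vol = (∫ u, M.ρ u ^ n ∂sphereMeasure n)⁻¹ *
      ∫ u, A.ρ u ^ n ∂sphereMeasure n := by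
    rw [vol, vol, mul_div_mul_left _ _ (by positivity), inv_mul_eq_div]
  rw [hratios, radialVolumeMeasure, average_withDensity_ofReal_inv_smul M.integrable_ρ_pow
    (fun u => pow_pos (M.ρ_pos u) n), integral_pair K.integrable_ρ_pow L.integrable_ρ_pow,
    Prod.smul_mk, smul_eq_mul, smul_eq_mul, hvol, hvol]

variable {K L M} {φ : ℝ → ℝ → ℝ}

theorem orliczF_vol_div (hn : 0 < n) :
    orliczF φ n (K.vol / M.vol, L.vol / M.vol) =
      φ ((M.vol / K.vol) ^ ((1 : ℝ) / n)) ((M.vol / L.vol) ^ ((1 : ℝ) / n)) := by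
  rw [orliczF_of_nonneg φ n (div_pos (K.vol_pos hn) (M.vol_pos hn)).le
    (div_pos (L.vol_pos hn) (M.vol_pos hn)).le, inv_div, inv_div]

theorem orliczF_radialRatios (hn : 0 < n) (hM : IsOrliczSum φ K L M) (u : 𝕊) :
    orliczF φ n (radialRatios K L M u) = 1 := by
  have hroot (A : StarBody n) : (((A.ρ u / M.ρ u) ^ n)⁻¹) ^ ((1 : ℝ) / n) = M.ρ u / A.ρ u := by
    rw [← inv_pow, inv_div, one_div,
      Real.pow_rpow_inv_natCast (div_pos (M.ρ_pos u) (A.ρ_pos u)).le hn.ne']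
  rw [radialRatios, orliczF_of_nonneg φ n (pow_pos (div_pos (K.ρ_pos u) (M.ρ_pos u)) n).le
    (pow_pos (div_pos (L.ρ_pos u) (M.ρ_pos u)) n).le, hroot, hroot]
  exact hM u (norm_eq_of_mem_sphere u)

theorem ratio_eq_of_radialRatios_eq (hn : 0 < n) {u v : 𝕊}
    (h : radialRatios K L M u = radialRatios K L M v) : L.ρ u / K.ρ u = L.ρ v / K.ρ v := by
  have hroot (A : StarBody n) (hA : (A.ρ u / M.ρ u) ^ n = (A.ρ v / M.ρ v) ^ n) :
      A.ρ u / M.ρ u = A.ρ v / M.ρ v :=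
    (pow_left_inj₀ (div_pos (A.ρ_pos u) (M.ρ_pos u)).le (div_pos (A.ρ_pos v) (M.ρ_pos v)).le
      hn.ne').1 hA
  rw [← div_div_div_cancel_right₀ (M.ρ_pos u).ne' (L.ρ u),
    ← div_div_div_cancel_right₀ (M.ρ_pos v).ne' (L.ρ v),
    hroot K (congrArg Prod.fst h), hroot L (congrArg Prod.snd h)]

/-- At every `u`, `t = ρ_M(u)/ρ_K(u)` solves `φ(t, t/λ) = 1`, whose left side is strictly
increasing in `t`. -/
theorem _root_.IsOrliczSum.div_eq_div_of_dilate (hφ : IsPhi2 φ) (hM : IsOrliczSum φ K L M) {lam : ℝ}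
    (hlam : 0 < lam) (hLK : ∀ u : 𝕊, L.ρ u = lam * K.ρ u) (u v : 𝕊) :
    M.ρ u / K.ρ u = M.ρ v / K.ρ v := by
  have hψ (w : 𝕊) : φ (M.ρ w / K.ρ w) (lam⁻¹ * (M.ρ w / K.ρ w)) = 1 := by
    have h := hM w (norm_eq_of_mem_sphere w)
    rw [hLK] at h
    convert h using 2
    field_simp
  exact (hφ.strictMonoOn_mul (inv_nonneg.2 hlam.le)).injOn
    (div_pos (M.ρ_pos u) (K.ρ_pos u)).le (div_pos (M.ρ_pos v) (K.ρ_pos v)).le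
    ((hψ u).trans (hψ v).symm)

theorem exists_radialRatios_eq_iff (hn : 0 < n) (hφ : IsPhi2 φ) (hM : IsOrliczSum φ K L M) :
    (∃ p, ∀ u, radialRatios K L M u = p) ↔
      ∃ lam : ℝ, 0 < lam ∧ ∀ u : EuclideanSpace ℝ (Fin n), ‖u‖ = 1 → L.ρ u = lam * K.ρ u := by
  obtain ⟨u₀⟩ := nonempty_sphere_euclideanSpace hn
  constructor
  · rintro ⟨p, hp⟩
    refine ⟨L.ρ u₀ / K.ρ u₀, div_pos (L.ρ_pos u₀) (K.ρ_pos u₀), fun u hu => ?_⟩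
    let v : 𝕊 := ⟨u, mem_sphere_zero_iff_norm.2 hu⟩
    rw [← ratio_eq_of_radialRatios_eq hn ((hp v).trans (hp u₀).symm),
      div_mul_cancel₀ _ (K.ρ_pos v).ne']
  · rintro ⟨lam, hlam, hLK⟩
    have hLK' (u : 𝕊) : L.ρ u = lam * K.ρ u := hLK u (norm_eq_of_mem_sphere u)
    refine ⟨radialRatios K L M u₀, fun u => ?_⟩
    have hKM : K.ρ u / M.ρ u = K.ρ u₀ / M.ρ u₀ := by
      rw [← inv_div, hM.div_eq_div_of_dilate hφ hlam hLK' u u₀, inv_div]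
    simp only [radialRatios, hLK', mul_div_assoc, hKM]

theorem orliczF_average_radialRatios_eq_one_iff (hn : 0 < n) (hφ : IsPhi2 φ)
    (hconv : StrictConvexOn ℝ (Ioi 0 ×ˢ Ioi 0) (orliczF φ n)) (hM : IsOrliczSum φ K L M) :
    orliczF φ n (⨍ u, radialRatios K L M u ∂M.radialVolumeMeasure) = 1 ↔
      ∃ p, ∀ u, radialRatios K L M u = p := by
  have := nonempty_sphere_euclideanSpace hn
  have hF : orliczF φ n ∘ radialRatios K L M = fun _ => 1 :=
    funext (orliczF_radialRatios hn hM)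
  have hcont := continuous_radialRatios K L M
  constructor
  · intro h
    have hpos (u : 𝕊) : radialRatios K L M u ∈ Ioi 0 ×ˢ Ioi 0 :=
      ⟨pow_pos (div_pos (K.ρ_pos u) (M.ρ_pos u)) n, pow_pos (div_pos (L.ρ_pos u) (M.ρ_pos u)) n⟩
    -- Jensen's inequality needs a closed domain: a quadrant `[m₁, ∞) × [m₂, ∞)` holding the
    -- compact image of `radialRatios`.
    obtain ⟨m₁, hm₁, h₁⟩ := (continuous_fst.comp hcont).exists_pos_forall_le fun u => (hpos u).1
    obtain ⟨m₂, hm₂, h₂⟩ := (continuous_snd.comp hcont).exists_pos_forall_le fun u => (hpos u).2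
    have hsub : Ici m₁ ×ˢ Ici m₂ ⊆ Ioi 0 ×ˢ Ioi 0 :=
      prod_mono (Ici_subset_Ioi.2 hm₁) (Ici_subset_Ioi.2 hm₂)
    have hconst := (hconv.subset hsub ((convex_Ici _).prod (convex_Ici _))).eq_average_of_average_le
      (μ := M.radialVolumeMeasure) ((hφ.continuousOn_orliczF n).mono hsub)
      (isClosed_Ici.prod isClosed_Ici) hcont (fun u => ⟨h₁ u, h₂ u⟩)
      (hcont.integrable_of_hasCompactSupport (.of_compactSpace _))
      (by rw [hF]; exact integrable_const 1)
      (by simp only [orliczF_radialRatios hn hM, average_const, h, le_refl])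
    exact ⟨_, congrFun hconst⟩
  · rintro ⟨p, hp⟩
    simp only [hp]
    rw [average_const, ← hp (Classical.arbitrary _)]
    exact orliczF_radialRatios hn hM _

end StarBody

/-- Equality case in the dual Orlicz-Brunn-Minkowski inequality: for strictly convex
`F_φ`, equality holds iff `K` and `L` are dilates of each other. -/
theorem dual_orlicz_brunn_minkowski_eq {n : ℕ} (hn : 0 < n) (φ : ℝ → ℝ → ℝ)
    (hφ : IsPhi2 φ)
    (hconv : StrictConvexOn ℝ (Set.Ioi 0 ×ˢ Set.Ioi 0)
      (fun p : ℝ × ℝ => φ (p.1 ^ (-(1 : ℝ) / n)) (p.2 ^ (-(1 : ℝ) / n))))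
    (K L M : StarBody n) (hM : IsOrliczSum φ K L M) :
    φ ((M.vol / K.vol) ^ ((1 : ℝ) / n)) ((M.vol / L.vol) ^ ((1 : ℝ) / n)) = 1 ↔
      ∃ lam : ℝ, 0 < lam ∧
        ∀ u : EuclideanSpace ℝ (Fin n), ‖u‖ = 1 → L.ρ u = lam * K.ρ u := by
  rw [← StarBody.orliczF_vol_div (φ := φ) hn, ← StarBody.average_radialRatios K L M hn,
    StarBody.orliczF_average_radialRatios_eq_one_iff hn hφ hconv hM,
    StarBody.exists_radialRatios_eq_iff hn hφ hM]
end
end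

section
/- Let K, L be star bodies in ℝⁿ, φ₁, φ₂ : [0,∞) → [0,∞) continuous strictly increasing with φᵢ(0)=0, φᵢ(1)=1, and suppose the left derivative φ₁'(1⁻) exists, is finite and positive. For ε > 0 let K +̃_{ε} L be the star body defined by φ₁(ρ_ε(u)/ρ_K(u)) + ε φ₂(ρ_ε(u)/ρ_L(u)) = 1. Then φ₁'(1⁻) · lim_{ε→0⁺} (|K| − |K +̃_ε L|)/(n ε) = (1/n) ∫_{S^{n-1}} φ₂(ρ_K(u)/ρ_L(u)) ρ_K(u)ⁿ dσ(u). -/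
noncomputable section

open Metric Set MeasureTheory Filter

/-- The class `Φ̃₁`: continuous strictly increasing on `[0,∞)` with
`φ(0) = 0` and `φ(1) = 1`. -/
def IsPhi1 (φ : ℝ → ℝ) : Prop :=
  ContinuousOn φ (Set.Ici 0) ∧ StrictMonoOn φ (Set.Ici 0) ∧ φ 0 = 0 ∧ φ 1 = 1

/-!
Write `r_ε = ρ_ε / ρ_K` and `s = ρ_K / ρ_L`. The defining equation reads
`φ₁ (r_ε) + ε φ₂ (r_ε s) = 1`, which forces `r_ε < 1` and, since `φ₂ (r_ε s) ≤ φ₂ (s)` is bounded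
on the sphere, `r_ε → 1⁻` uniformly as `ε → 0⁺`. Eliminating `ε` gives
`(ρ_Kⁿ - ρ_εⁿ) / (n ε) = ρ_Kⁿ φ₂ (r_ε s) · ((r_εⁿ - 1) / (φ₁ (r_ε) - 1)) / n`,
and the last quotient tends to `n / φ₁'(1⁻)`, so it is eventually bounded. Dominated convergence
on the sphere then yields the limit of `(|K| - |K +̃_ε L|) / (n ε)`.
-/

open Topology

theorem HasDerivWithinAt.tendsto_sub_div_sub {f g : ℝ → ℝ} {f' g' a : ℝ} {s : Set ℝ}
    (hf : HasDerivWithinAt f f' s a) (hg : HasDerivWithinAt g g' s a) (hg' : g' ≠ 0) :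
    Tendsto (fun x => (f x - f a) / (g x - g a)) (𝓝[s \ {a}] a) (𝓝 (f' / g')) := by
  refine ((hasDerivWithinAt_iff_tendsto_slope.1 hf).div
    (hasDerivWithinAt_iff_tendsto_slope.1 hg) hg').congr' ?_
  filter_upwards [self_mem_nhdsWithin] with x hx
  rw [Pi.div_apply, slope_def_field, slope_def_field,
    div_div_div_cancel_right₀ (sub_ne_zero.2 hx.2)]

theorem tendsto_pow_sub_one_div_sub_one {α : Type*} {l : Filter α} {r : α → ℝ} {φ : ℝ → ℝ}
    {d : ℝ} (n : ℕ) (hφ1 : φ 1 = 1) (hφ : HasDerivWithinAt φ d (Iio 1) 1) (hd : d ≠ 0)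
    (hr : Tendsto r l (𝓝[<] 1)) :
    Tendsto (fun x => (r x ^ n - 1) / (φ (r x) - 1)) l (𝓝 (n / d)) := by
  have h := (hasDerivAt_pow n (1 : ℝ)).hasDerivWithinAt.tendsto_sub_div_sub hφ hd
  rw [sdiff_singleton_eq_self self_notMem_Iio] at h
  simpa [hφ1, Function.comp_def] using h.comp hr

theorem lt_one_of_add_mul_eq_one {φ : ℝ → ℝ} (hφ : StrictMonoOn φ (Ici 0)) (hφ1 : φ 1 = 1)
    {r ε c : ℝ} (hr : 0 ≤ r) (hεc : 0 < ε * c) (h : φ r + ε * c = 1) : r < 1 :=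
  (hφ.lt_iff_lt hr (mem_Ici.2 zero_le_one)).1 (by linarith)

theorem tendsto_nhdsLT_one_of_add_mul_eq_one {X : Type*} {φ : ℝ → ℝ}
    (hφ : StrictMonoOn φ (Ici 0)) (hφ1 : φ 1 = 1) {r c : ℝ → X → ℝ} {M : ℝ}
    (hr : ∀ ε > 0, ∀ x, r ε x ∈ Ico 0 1) (hc : ∀ ε > 0, ∀ x, c ε x ≤ M)
    (h : ∀ ε > 0, ∀ x, φ (r ε x) + ε * c ε x = 1) :
    Tendsto (fun p : ℝ × X => r p.1 p.2) (𝓝[>] 0 ×ˢ ⊤) (𝓝[<] 1) := by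
  refine (nhdsLT_basis 1).tendsto_right_iff.2 fun θ hθ => ?_
  have hφθ : φ (max θ 0) < 1 :=
    hφ1 ▸ hφ (le_max_right θ 0) (mem_Ici.2 zero_le_one) (max_lt hθ one_pos)
  have hsmall : ∀ᶠ ε in 𝓝[>] (0 : ℝ), ε * M < 1 - φ (max θ 0) := by
    refine nhdsWithin_le_nhds (((continuous_mul_const M).tendsto' 0 0 (zero_mul M)).eventually
      (gt_mem_nhds (by linarith)))
  refine mem_prod_top.2 ?_
  filter_upwards [hsmall, self_mem_nhdsWithin] with ε hεM hε x
  obtain ⟨hr0, hr1⟩ := hr ε hε x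
  have hεc : ε * c ε x ≤ ε * M := mul_le_mul_of_nonneg_left (hc ε hε x) (le_of_lt hε)
  have hlt : φ (max θ 0) < φ (r ε x) := by linarith [h ε hε x]
  exact ⟨(le_max_left θ 0).trans_lt ((hφ.lt_iff_lt (le_max_right θ 0) hr0).1 hlt), hr1⟩

theorem sub_pow_div_eq_of_add_mul_eq_one {φ : ℝ → ℝ} {ρ r ε c : ℝ} (n : ℕ) (hc : c ≠ 0)
    (h : φ r + ε * c = 1) :
    (ρ ^ n - (r * ρ) ^ n) / (n * ε) = ρ ^ n * c * ((r ^ n - 1) / (φ r - 1)) / n := by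
  rw [show φ r - 1 = -(ε * c) by linarith, mul_pow]
  field_simp
  ring

instance inst_s16 (n : ℕ) : IsFiniteMeasure (sphereMeasure n) := by
  unfold sphereMeasure
  infer_instance

namespace StarBody

variable {n : ℕ}

theorem ρ_pos_s16 (K : StarBody n) (u : sphere (0 : EuclideanSpace ℝ (Fin n)) 1) : 0 < K.ρ u :=
  K.pos u (mem_sphere_zero_iff_norm.1 u.2)

theorem continuous_ρ_sphere (K : StarBody n) :
    Continuous fun u : sphere (0 : EuclideanSpace ℝ (Fin n)) 1 => K.ρ u :=
  K.cont.domRestrict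

theorem ρ_div_ρ_pos (K L : StarBody n) (u : sphere (0 : EuclideanSpace ℝ (Fin n)) 1) :
    0 < K.ρ u / L.ρ u :=
  div_pos (K.ρ_pos_s16 u) (L.ρ_pos_s16 u)

theorem vol_sub_vol (K M : StarBody n) :
    K.vol - M.vol = 1 / n * ∫ u, (K.ρ u ^ n - M.ρ u ^ n) ∂sphereMeasure n := by
  have hint (K : StarBody n) : Integrable (fun u : sphere (0 : EuclideanSpace ℝ (Fin n)) 1 =>
      K.ρ u ^ n) (sphereMeasure n) :=
    (K.continuous_ρ_sphere.pow n).integrable_of_hasCompactSupport (.of_compactSpace _)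
  rw [vol, vol, integral_sub (hint K) (hint M), mul_sub]

theorem bddAbove_range_comp_div {φ : ℝ → ℝ} (hφ : ContinuousOn φ (Ici 0)) (K L : StarBody n) :
    BddAbove (range fun u : sphere (0 : EuclideanSpace ℝ (Fin n)) 1 => φ (K.ρ u / L.ρ u)) :=
  (isCompact_range (hφ.comp_continuous
    (K.continuous_ρ_sphere.div L.continuous_ρ_sphere fun u => (L.ρ_pos_s16 u).ne')
    fun u => (K.ρ_div_ρ_pos L u).le)).bddAbove

end StarBody

section OrliczFamily

variable {n : ℕ} {φ₁ φ₂ : ℝ → ℝ} {K L M : StarBody n} {ε : ℝ}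

theorem IsOrliczSum.add_mul_ratio_eq_one (h : IsOrliczSum (fun a b => φ₁ a + ε * φ₂ b) K L M)
    (u : sphere (0 : EuclideanSpace ℝ (Fin n)) 1) :
    φ₁ (M.ρ u / K.ρ u) + ε * φ₂ (M.ρ u / K.ρ u * (K.ρ u / L.ρ u)) = 1 := by
  rw [div_mul_div_cancel₀ (K.ρ_pos_s16 u).ne']
  exact h u (mem_sphere_zero_iff_norm.1 u.2)

theorem IsOrliczSum.ratio_lt_one (hφ₁ : StrictMonoOn φ₁ (Ici 0)) (hφ₁1 : φ₁ 1 = 1)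
    (hφ₂ : ∀ x > 0, 0 < φ₂ x) (hε : 0 < ε) (h : IsOrliczSum (fun a b => φ₁ a + ε * φ₂ b) K L M)
    (u : sphere (0 : EuclideanSpace ℝ (Fin n)) 1) : M.ρ u / K.ρ u < 1 :=
  lt_one_of_add_mul_eq_one hφ₁ hφ₁1 (M.ρ_div_ρ_pos K u).le
    (mul_pos hε (hφ₂ _ (mul_pos (M.ρ_div_ρ_pos K u) (K.ρ_div_ρ_pos L u))))
    (h.add_mul_ratio_eq_one u)

theorem IsOrliczSum.map_ratio_mul_le (hφ₁ : StrictMonoOn φ₁ (Ici 0)) (hφ₁1 : φ₁ 1 = 1)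
    (hφ₂m : MonotoneOn φ₂ (Ici 0)) (hφ₂pos : ∀ x > 0, 0 < φ₂ x) (hε : 0 < ε)
    (h : IsOrliczSum (fun a b => φ₁ a + ε * φ₂ b) K L M)
    (u : sphere (0 : EuclideanSpace ℝ (Fin n)) 1) :
    φ₂ (M.ρ u / K.ρ u * (K.ρ u / L.ρ u)) ≤ φ₂ (K.ρ u / L.ρ u) := by
  have hs := K.ρ_div_ρ_pos L u
  exact hφ₂m (mul_pos (M.ρ_div_ρ_pos K u) hs).le hs.le
    (mul_le_of_le_one_left hs.le (h.ratio_lt_one hφ₁ hφ₁1 hφ₂pos hε u).le)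

theorem IsOrliczSum.sub_pow_div_eq (hφ₂ : ∀ x > 0, 0 < φ₂ x)
    (h : IsOrliczSum (fun a b => φ₁ a + ε * φ₂ b) K L M)
    (u : sphere (0 : EuclideanSpace ℝ (Fin n)) 1) :
    (K.ρ u ^ n - M.ρ u ^ n) / (n * ε) = K.ρ u ^ n * φ₂ (M.ρ u / K.ρ u * (K.ρ u / L.ρ u)) *
      (((M.ρ u / K.ρ u) ^ n - 1) / (φ₁ (M.ρ u / K.ρ u) - 1)) / n := by
  conv_lhs => rw [← div_mul_cancel₀ (M.ρ u) (K.ρ_pos_s16 u).ne']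
  exact sub_pow_div_eq_of_add_mul_eq_one n
    (hφ₂ _ (mul_pos (M.ρ_div_ρ_pos K u) (K.ρ_div_ρ_pos L u))).ne' (h.add_mul_ratio_eq_one u)

variable {S : ℝ → StarBody n} {d : ℝ}

theorem tendsto_ratio_of_isOrliczSum (hφ₁ : StrictMonoOn φ₁ (Ici 0))
    (hφ₁1 : φ₁ 1 = 1) (hφ₂c : ContinuousOn φ₂ (Ici 0)) (hφ₂m : MonotoneOn φ₂ (Ici 0))
    (hφ₂pos : ∀ x > 0, 0 < φ₂ x)
    (hS : ∀ ε > 0, IsOrliczSum (fun a b => φ₁ a + ε * φ₂ b) K L (S ε)) :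
    Tendsto (fun p : ℝ × sphere (0 : EuclideanSpace ℝ (Fin n)) 1 => (S p.1).ρ p.2 / K.ρ p.2)
      (𝓝[>] 0 ×ˢ ⊤) (𝓝[<] 1) := by
  obtain ⟨B, hB⟩ := K.bddAbove_range_comp_div hφ₂c L
  exact tendsto_nhdsLT_one_of_add_mul_eq_one hφ₁ hφ₁1 (M := B)
    (fun ε hε u => ⟨((S ε).ρ_div_ρ_pos K u).le, (hS ε hε).ratio_lt_one hφ₁ hφ₁1 hφ₂pos hε u⟩)
    (fun ε hε u => ((hS ε hε).map_ratio_mul_le hφ₁ hφ₁1 hφ₂m hφ₂pos hε u).trans (hB ⟨u, rfl⟩))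
    (fun ε hε u => (hS ε hε).add_mul_ratio_eq_one u)

theorem tendsto_sub_pow_div_of_isOrliczSum (hφ₁1 : φ₁ 1 = 1)
    (hφ₁d : HasDerivWithinAt φ₁ d (Iio 1) 1) (hd : d ≠ 0) (hφ₂c : ContinuousOn φ₂ (Ici 0))
    (hφ₂pos : ∀ x > 0, 0 < φ₂ x) (hn : n ≠ 0)
    (hS : ∀ ε > 0, IsOrliczSum (fun a b => φ₁ a + ε * φ₂ b) K L (S ε))
    (hr : Tendsto (fun p : ℝ × sphere (0 : EuclideanSpace ℝ (Fin n)) 1 =>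
      (S p.1).ρ p.2 / K.ρ p.2) (𝓝[>] 0 ×ˢ ⊤) (𝓝[<] 1))
    (u : sphere (0 : EuclideanSpace ℝ (Fin n)) 1) :
    Tendsto (fun ε => (K.ρ u ^ n - (S ε).ρ u ^ n) / (n * ε)) (𝓝[>] 0)
      (𝓝 (φ₂ (K.ρ u / L.ρ u) * K.ρ u ^ n / d)) := by
  have hru : Tendsto (fun ε => (S ε).ρ u / K.ρ u) (𝓝[>] 0) (𝓝[<] 1) :=
    hr.comp (tendsto_id.prodMk tendsto_top)
  have hs := K.ρ_div_ρ_pos L u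
  have hφ₂s : Tendsto (fun ε => φ₂ ((S ε).ρ u / K.ρ u * (K.ρ u / L.ρ u))) (𝓝[>] 0)
      (𝓝 (φ₂ (K.ρ u / L.ρ u))) := by
    refine (hφ₂c.continuousAt (Ici_mem_nhds hs)).tendsto.comp ?_
    simpa using (tendsto_nhdsWithin_iff.1 hru).1.mul_const (K.ρ u / L.ρ u)
  have hq := tendsto_pow_sub_one_div_sub_one n hφ₁1 hφ₁d hd hru
  have hlim := ((hφ₂s.const_mul (K.ρ u ^ n)).mul hq).div_const (n : ℝ)
  rw [show K.ρ u ^ n * φ₂ (K.ρ u / L.ρ u) * (n / d) / n = φ₂ (K.ρ u / L.ρ u) * K.ρ u ^ n / d by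
    field_simp] at hlim
  refine hlim.congr' ?_
  filter_upwards [self_mem_nhdsWithin] with ε hε
  exact ((hS ε hε).sub_pow_div_eq hφ₂pos u).symm

theorem exists_bound_sub_pow_div_of_isOrliczSum (hφ₁ : StrictMonoOn φ₁ (Ici 0))
    (hφ₁1 : φ₁ 1 = 1) (hφ₁d : HasDerivWithinAt φ₁ d (Iio 1) 1) (hd : d ≠ 0)
    (hφ₂c : ContinuousOn φ₂ (Ici 0)) (hφ₂m : MonotoneOn φ₂ (Ici 0))
    (hφ₂pos : ∀ x > 0, 0 < φ₂ x)
    (hS : ∀ ε > 0, IsOrliczSum (fun a b => φ₁ a + ε * φ₂ b) K L (S ε))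
    (hr : Tendsto (fun p : ℝ × sphere (0 : EuclideanSpace ℝ (Fin n)) 1 =>
      (S p.1).ρ p.2 / K.ρ p.2) (𝓝[>] 0 ×ˢ ⊤) (𝓝[<] 1)) :
    ∃ C, ∀ᶠ ε in 𝓝[>] 0, ∀ u : sphere (0 : EuclideanSpace ℝ (Fin n)) 1,
      ‖(K.ρ u ^ n - (S ε).ρ u ^ n) / (n * ε)‖ ≤ C := by
  obtain ⟨Q, hQ⟩ := (tendsto_pow_sub_one_div_sub_one n hφ₁1 hφ₁d hd hr).norm.isBoundedUnder_le
  obtain ⟨A, hA⟩ := (isCompact_range (K.continuous_ρ_sphere.pow n)).bddAbove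
  obtain ⟨B, hB⟩ := K.bddAbove_range_comp_div hφ₂c L
  refine ⟨A * B * Q / n, ?_⟩
  filter_upwards [mem_prod_top.1 hQ, self_mem_nhdsWithin] with ε hQε hε u
  have hKu : K.ρ u ^ n ≤ A := hA ⟨u, rfl⟩
  have hc₀ : 0 ≤ φ₂ ((S ε).ρ u / K.ρ u * (K.ρ u / L.ρ u)) :=
    (hφ₂pos _ (mul_pos ((S ε).ρ_div_ρ_pos K u) (K.ρ_div_ρ_pos L u))).le
  have hcB := ((hS ε hε).map_ratio_mul_le hφ₁ hφ₁1 hφ₂m hφ₂pos hε u).trans (hB ⟨u, rfl⟩)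
  have hA₀ : 0 ≤ A := (pow_nonneg (K.ρ_pos_s16 u).le n).trans hKu
  rw [(hS ε hε).sub_pow_div_eq hφ₂pos u, norm_div, norm_mul, norm_mul, Real.norm_natCast,
    Real.norm_of_nonneg (pow_nonneg (K.ρ_pos_s16 u).le n), Real.norm_of_nonneg hc₀]
  gcongr
  · exact mul_nonneg hA₀ (hc₀.trans hcB)
  · exact hQε u

theorem tendsto_vol_sub_div_of_isOrliczSum (hn : n ≠ 0) (hφ₁ : StrictMonoOn φ₁ (Ici 0))
    (hφ₁1 : φ₁ 1 = 1) (hφ₁d : HasDerivWithinAt φ₁ d (Iio 1) 1) (hd : d ≠ 0)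
    (hφ₂c : ContinuousOn φ₂ (Ici 0)) (hφ₂m : MonotoneOn φ₂ (Ici 0))
    (hφ₂pos : ∀ x > 0, 0 < φ₂ x)
    (hS : ∀ ε > 0, IsOrliczSum (fun a b => φ₁ a + ε * φ₂ b) K L (S ε)) :
    Tendsto (fun ε => (K.vol - (S ε).vol) / (n * ε)) (𝓝[>] 0)
      (𝓝 (1 / n * ∫ u, φ₂ (K.ρ u / L.ρ u) * K.ρ u ^ n / d ∂sphereMeasure n)) := by
  have hr := tendsto_ratio_of_isOrliczSum hφ₁ hφ₁1 hφ₂c hφ₂m hφ₂pos hS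
  obtain ⟨C, hC⟩ :=
    exists_bound_sub_pow_div_of_isOrliczSum hφ₁ hφ₁1 hφ₁d hd hφ₂c hφ₂m hφ₂pos hS hr
  have hmeas (ε : ℝ) : AEStronglyMeasurable (fun u : sphere (0 : EuclideanSpace ℝ (Fin n)) 1 =>
      (K.ρ u ^ n - (S ε).ρ u ^ n) / (n * ε)) (sphereMeasure n) :=
    (((K.continuous_ρ_sphere.pow n).sub ((S ε).continuous_ρ_sphere.pow n)).div_const
      _).aestronglyMeasurable
  have hlim := tendsto_integral_filter_of_dominated_convergence (fun _ => C)
    (.of_forall hmeas) (hC.mono fun ε hε => ae_of_all _ hε) (integrable_const C)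
    (ae_of_all _ (tendsto_sub_pow_div_of_isOrliczSum hφ₁1 hφ₁d hd hφ₂c hφ₂pos hn hS hr))
  refine (hlim.const_mul (1 / (n : ℝ))).congr fun ε => ?_
  rw [StarBody.vol_sub_vol, integral_div, mul_div_assoc]

end OrliczFamily

/-- The variational formula yielding the Orlicz `L_φ`-dual mixed volume:
`φ₁'(1⁻) · lim_{ε→0⁺} (|K| − |K +̃_ε L|)/(nε)
  = (1/n) ∫_{S^{n-1}} φ₂(ρ_K/ρ_L) ρ_Kⁿ dσ`. -/
theorem dual_mixed_volume_variational {n : ℕ} (hn : 0 < n)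
    (φ₁ φ₂ : ℝ → ℝ) (hφ₁ : IsPhi1 φ₁) (hφ₂ : IsPhi1 φ₂)
    (d : ℝ) (hd : 0 < d) (hderiv : HasDerivWithinAt φ₁ d (Set.Iio 1) 1)
    (K L : StarBody n) (S : ℝ → StarBody n)
    (hS : ∀ ε : ℝ, 0 < ε → ∀ u : EuclideanSpace ℝ (Fin n), ‖u‖ = 1 →
      φ₁ ((S ε).ρ u / K.ρ u) + ε * φ₂ ((S ε).ρ u / L.ρ u) = 1) :
    Filter.Tendsto (fun ε : ℝ => d * ((K.vol - (S ε).vol) / ((n : ℝ) * ε)))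
      (nhdsWithin 0 (Set.Ioi 0))
      (nhds ((1 / (n : ℝ)) * ∫ u : sphere (0 : EuclideanSpace ℝ (Fin n)) 1,
        φ₂ (K.ρ u / L.ρ u) * (K.ρ u) ^ n ∂(sphereMeasure n))) := by
  obtain ⟨-, hφ₁m, -, hφ₁1⟩ := hφ₁
  obtain ⟨hφ₂c, hφ₂m, hφ₂0, -⟩ := hφ₂
  have hφ₂pos : ∀ x > 0, 0 < φ₂ x := fun x hx => hφ₂0 ▸ hφ₂m self_mem_Ici hx.le hx
  have h := (tendsto_vol_sub_div_of_isOrliczSum hn.ne' hφ₁m hφ₁1 hderiv hd.ne' hφ₂c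
    hφ₂m.monotoneOn hφ₂pos hS).const_mul d
  rwa [integral_div, ← mul_div_assoc, mul_div_cancel₀ _ hd.ne'] at h
end
end

section
/- For T ∈ SL(n) (invertible linear map with |det T| = 1), any continuous positive function φ : (0,∞) → (0,∞), and star bodies K, L in ℝⁿ, the Orlicz L_φ-dual mixed volume is invariant: Ṽ_φ(TK, TL) = Ṽ_φ(K, L). -/
noncomputable section

open Metric Set MeasureTheory Filter

/-- The Orlicz `L_φ`-dual mixed volume
`Ṽ_φ(K,L) = (1/n) ∫_{S^{n-1}} φ(ρ_K(u)/ρ_L(u)) ρ_K(u)ⁿ dσ(u)`. -/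
def dualMixedVolume {n : ℕ} (φ : ℝ → ℝ) (K L : StarBody n) : ℝ :=
  (1 / (n : ℝ)) * ∫ u : sphere (0 : EuclideanSpace ℝ (Fin n)) 1,
    φ (K.ρ u / L.ρ u) * (K.ρ u) ^ n ∂(sphereMeasure n)

/-- `K'` is the image `T K` of the star body `K` under the invertible linear map `T`,
expressed via radial functions: `ρ_{TK}(u) ‖T⁻¹u‖ = ρ_K(T⁻¹u / ‖T⁻¹u‖)`. -/
def IsLinearImage {n : ℕ} (T : EuclideanSpace ℝ (Fin n) ≃ₗ[ℝ] EuclideanSpace ℝ (Fin n))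
    (K K' : StarBody n) : Prop :=
  ∀ u : EuclideanSpace ℝ (Fin n), ‖u‖ = 1 →
    K'.ρ u * ‖T.symm u‖ = K.ρ (‖T.symm u‖⁻¹ • T.symm u)

/-! Extend a radial function `ρ` to `ℝⁿ \ {0}` by `ρ(x) = ρ(x / ‖x‖) / ‖x‖`, which is homogeneous of
degree `-1`. Then `Ṽ_φ(K, L)` is, in polar coordinates, the Lebesgue integral of
`φ(ρ_K(x) / ρ_L(x))` over the body `{1 < ρ_K}`, the radial function of `TK` is `ρ_K ∘ T⁻¹`, and
`T⁻¹` preserves Lebesgue measure when `|det T| = 1`. -/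

section RadialExtension

variable {E : Type*} [NormedAddCommGroup E] [NormedSpace ℝ E]

def radialExtension (ρ : E → ℝ) (x : E) : ℝ := ρ (‖x‖⁻¹ • x) / ‖x‖

@[simp]
theorem radialExtension_zero (ρ : E → ℝ) : radialExtension ρ 0 = 0 := by
  simp [radialExtension]

theorem one_lt_radialExtension_iff {ρ : E → ℝ} {x : E} (hx : x ≠ 0) :
    1 < radialExtension ρ x ↔ ‖x‖ < ρ (‖x‖⁻¹ • x) :=
  one_lt_div (norm_pos_iff.2 hx)

theorem radialExtension_div_radialExtension {ρ σ : E → ℝ} {x : E} (hx : x ≠ 0) :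
    radialExtension ρ x / radialExtension σ x = ρ (‖x‖⁻¹ • x) / σ (‖x‖⁻¹ • x) :=
  div_div_div_cancel_right₀ (norm_ne_zero_iff.2 hx) _ _

def dualMixedVolumeDensity (φ : ℝ → ℝ) (ρ σ : E → ℝ) (x : E) : ℝ :=
  if 1 < radialExtension ρ x then φ (radialExtension ρ x / radialExtension σ x) else 0

end RadialExtension

section Polar

theorem integral_ite_lt_volumeIoiPow (k : ℕ) {a : ℝ} (ha : 0 < a) (c : ℝ) :
    ∫ r : Ioi (0 : ℝ), (if (r : ℝ) < a then c else 0) ∂(Measure.volumeIoiPow k) =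
      c * (a ^ (k + 1) / (k + 1)) := by
  change ∫ r, (Iio ⟨a, ha⟩).indicator (fun _ => c) r ∂(Measure.volumeIoiPow k) = _
  rw [integral_indicator measurableSet_Iio, setIntegral_const, Measure.real_def,
    Measure.volumeIoiPow_apply_Iio, ENNReal.toReal_ofReal (by positivity), smul_eq_mul, mul_comm]

theorem integrable_ite_lt_of_continuousOn {E : Type*} [NormedAddCommGroup E] [MeasurableSpace E]
    [BorelSpace E] [ProperSpace E] (ν : Measure (sphere (0 : E) 1)) [IsFiniteMeasure ν] (k : ℕ)
    {ρ f : E → ℝ} (hρ : ContinuousOn ρ (sphere 0 1)) (hf : ContinuousOn f (sphere 0 1)) :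
    Integrable (fun p : sphere (0 : E) 1 × Ioi (0 : ℝ) => if (p.2 : ℝ) < ρ p.1 then f p.1 else 0)
      (ν.prod (Measure.volumeIoiPow k)) := by
  obtain ⟨R, hR⟩ := (isCompact_sphere (0 : E) 1).exists_bound_of_continuousOn hρ
  obtain ⟨C, hC⟩ := (isCompact_sphere (0 : E) 1).exists_bound_of_continuousOn hf
  set A := {p : sphere (0 : E) 1 × Ioi (0 : ℝ) | (p.2 : ℝ) < ρ p.1}
  have hA : IsOpen A :=
    isOpen_lt (continuous_subtype_val.comp continuous_snd) (hρ.domRestrict.comp continuous_fst)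
  have hR₁ : (0 : ℝ) < |R| + 1 := by positivity
  have hA_sub : A ⊆ univ ×ˢ Iio ⟨|R| + 1, hR₁⟩ := fun p (hp : (p.2 : ℝ) < ρ p.1) =>
    ⟨trivial, show (p.2 : ℝ) < |R| + 1 by
      have := (le_abs_self (ρ p.1)).trans (hR p.1 p.1.2)
      linarith [le_abs_self R]⟩
  have hA_fin : ν.prod (Measure.volumeIoiPow k) A ≠ ⊤ := by
    refine ne_top_of_le_ne_top ?_ (measure_mono hA_sub)
    rw [Measure.prod_prod, Measure.volumeIoiPow_apply_Iio]
    exact ENNReal.mul_ne_top (measure_ne_top _ _) ENNReal.ofReal_ne_top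
  change Integrable (A.indicator fun p => f p.1) _
  rw [integrable_indicator_iff hA.measurableSet]
  exact Measure.integrableOn_of_bounded hA_fin
    (hf.domRestrict.comp continuous_fst).aestronglyMeasurable (.of_forall fun p => hC p.1 p.1.2)

variable {E : Type*} [NormedAddCommGroup E] [NormedSpace ℝ E] [MeasurableSpace E] [BorelSpace E]
  [FiniteDimensional ℝ E] [Nontrivial E] (μ : Measure E) [μ.IsAddHaarMeasure]

theorem integral_ite_one_lt_radialExtension {ρ f : E → ℝ} (hρ : ContinuousOn ρ (sphere 0 1))
    (hρ_pos : ∀ u ∈ sphere (0 : E) 1, 0 < ρ u) (hf : ContinuousOn f (sphere 0 1)) :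
    ∫ x, (if 1 < radialExtension ρ x then f (‖x‖⁻¹ • x) else 0) ∂μ =
      (Module.finrank ℝ E : ℝ)⁻¹ * ∫ u, f u * ρ u ^ Module.finrank ℝ E ∂μ.toSphere := by
  set d := Module.finrank ℝ E
  have hd : d - 1 + 1 = d := Nat.sub_add_cancel Module.finrank_pos
  have hd' : ((d - 1 : ℕ) : ℝ) + 1 = d := by rw [← Nat.cast_add_one, hd]
  set g := fun x : E => if 1 < radialExtension ρ x then f (‖x‖⁻¹ • x) else 0
  set G := fun p : sphere (0 : E) 1 × Ioi (0 : ℝ) => if (p.2 : ℝ) < ρ p.1 then f p.1 else 0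
  calc ∫ x, g x ∂μ
      = ∫ x : ({0}ᶜ : Set E), g x ∂(μ.comap (↑)) := by
        rw [integral_subtype_comap (measurableSet_singleton _).compl g, restrict_compl_singleton]
    _ = ∫ x : ({0}ᶜ : Set E), G (homeomorphUnitSphereProd E x) ∂(μ.comap (↑)) :=
        integral_congr_ae (.of_forall fun x => by simp [g, G, one_lt_radialExtension_iff x.2])
    _ = ∫ p, G p ∂(μ.toSphere.prod (Measure.volumeIoiPow (d - 1))) :=
        μ.measurePreserving_homeomorphUnitSphereProd.integral_comp
          (Homeomorph.measurableEmbedding _) G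
    _ = ∫ u, ∫ r, G (u, r) ∂(Measure.volumeIoiPow (d - 1)) ∂μ.toSphere :=
        integral_prod G (integrable_ite_lt_of_continuousOn _ _ hρ hf)
    _ = ∫ u, (d : ℝ)⁻¹ * (f u * ρ u ^ d) ∂μ.toSphere := by
        refine integral_congr_ae (.of_forall fun u => ?_)
        simp only [G]
        rw [integral_ite_lt_volumeIoiPow _ (hρ_pos u u.2), hd, hd']
        ring
    _ = _ := integral_const_mul _ _

end Polar

theorem LinearEquiv.measurePreserving_of_abs_det_eq_one {E : Type*} [NormedAddCommGroup E]
    [NormedSpace ℝ E] [MeasurableSpace E] [BorelSpace E] [FiniteDimensional ℝ E]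
    {μ : Measure E} [μ.IsAddHaarMeasure] (f : E ≃ₗ[ℝ] E)
    (hf : |LinearMap.det (f : E →ₗ[ℝ] E)| = 1) : MeasurePreserving f μ μ := by
  refine ⟨f.toContinuousLinearEquiv.continuous.measurable, ?_⟩
  rw [← f.coe_coe, Measure.map_linearMap_addHaar_eq_smul_addHaar μ (f.isUnit_det').ne_zero,
    abs_inv, hf, inv_one, ENNReal.ofReal_one, one_smul]

theorem dualMixedVolume_eq_integral {n : ℕ} (φ : ℝ → ℝ) (hφ : ContinuousOn φ (Ioi 0))
    (K L : StarBody n) :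
    dualMixedVolume φ K L = ∫ x, dualMixedVolumeDensity φ K.ρ L.ρ x := by
  rcases Nat.eq_zero_or_pos n with rfl | hn
  · simp [dualMixedVolume, dualMixedVolumeDensity,
      Subsingleton.elim _ (0 : EuclideanSpace ℝ (Fin 0))]
  have : Nontrivial (EuclideanSpace ℝ (Fin n)) :=
    Module.nontrivial_of_finrank_pos (by rwa [finrank_euclideanSpace_fin])
  have hK_pos : ∀ u ∈ sphere (0 : EuclideanSpace ℝ (Fin n)) 1, 0 < K.ρ u :=
    fun u hu => K.pos u (mem_sphere_zero_iff_norm.1 hu)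
  have hL_pos : ∀ u ∈ sphere (0 : EuclideanSpace ℝ (Fin n)) 1, 0 < L.ρ u :=
    fun u hu => L.pos u (mem_sphere_zero_iff_norm.1 hu)
  have hf : ContinuousOn (fun u => φ (K.ρ u / L.ρ u)) (sphere 0 1) :=
    hφ.comp (K.cont.div L.cont fun u hu => (hL_pos u hu).ne')
      fun u hu => div_pos (hK_pos u hu) (hL_pos u hu)
  have polar := integral_ite_one_lt_radialExtension volume K.cont hK_pos hf
  rw [finrank_euclideanSpace_fin] at polar
  rw [dualMixedVolume, sphereMeasure, one_div, ← polar]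
  refine integral_congr_ae (.of_forall fun x => ?_)
  rcases eq_or_ne x 0 with rfl | hx
  · norm_num [dualMixedVolumeDensity]
  · simp only [dualMixedVolumeDensity, radialExtension_div_radialExtension hx]

theorem IsLinearImage.radialExtension_eq {n : ℕ}
    {T : EuclideanSpace ℝ (Fin n) ≃ₗ[ℝ] EuclideanSpace ℝ (Fin n)} {K K' : StarBody n}
    (h : IsLinearImage T K K') (x : EuclideanSpace ℝ (Fin n)) :
    radialExtension K'.ρ x = radialExtension K.ρ (T.symm x) := by
  rcases eq_or_ne x 0 with rfl | hx
  · simp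
  set y := T.symm x
  have hx₀ : ‖x‖ ≠ 0 := norm_ne_zero_iff.2 hx
  have hy₀ : ‖y‖ ≠ 0 := norm_ne_zero_iff.2 (by simpa [y] using hx)
  have hTu : T.symm (‖x‖⁻¹ • x) = ‖x‖⁻¹ • y := map_smul _ _ _
  have hTu_norm : ‖‖x‖⁻¹ • y‖ = ‖x‖⁻¹ * ‖y‖ := by rw [norm_smul, norm_inv, norm_norm]
  have h_dir : (‖x‖⁻¹ * ‖y‖)⁻¹ • ‖x‖⁻¹ • y = ‖y‖⁻¹ • y := by
    rw [smul_smul]; congr 1; field_simp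
  have hρ := h (‖x‖⁻¹ • x) (norm_smul_inv_norm (𝕜 := ℝ) hx)
  rw [hTu, hTu_norm, h_dir] at hρ
  rw [radialExtension, radialExtension, ← hρ]
  field_simp

theorem dual_mixed_volume_sl_invariant_general {n : ℕ} (φ : ℝ → ℝ)
    (hφc : ContinuousOn φ (Set.Ioi 0))
    (T : EuclideanSpace ℝ (Fin n) ≃ₗ[ℝ] EuclideanSpace ℝ (Fin n))
    (hT : |LinearMap.det (T : EuclideanSpace ℝ (Fin n) →ₗ[ℝ] EuclideanSpace ℝ (Fin n))| = 1)
    (K L K' L' : StarBody n)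
    (hK : IsLinearImage T K K') (hL : IsLinearImage T L L') :
    dualMixedVolume φ K' L' = dualMixedVolume φ K L := by
  have hT_symm : MeasurePreserving T.symm volume volume :=
    T.symm.measurePreserving_of_abs_det_eq_one
      (by rw [LinearEquiv.det_coe_symm, abs_inv, hT, inv_one])
  have hT_emb : MeasurableEmbedding T.symm :=
    T.symm.toContinuousLinearEquiv.toHomeomorph.measurableEmbedding
  have h_density (x) : dualMixedVolumeDensity φ K'.ρ L'.ρ x =
      dualMixedVolumeDensity φ K.ρ L.ρ (T.symm x) := by
    simp only [dualMixedVolumeDensity, hK.radialExtension_eq, hL.radialExtension_eq]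
  rw [dualMixedVolume_eq_integral φ hφc K' L', dualMixedVolume_eq_integral φ hφc K L]
  simp only [h_density]
  exact hT_symm.integral_comp hT_emb _

/-- `SL(n)`-invariance of the Orlicz `L_φ`-dual mixed volume. -/
theorem dual_mixed_volume_sl_invariant {n : ℕ} (φ : ℝ → ℝ)
    (hφc : ContinuousOn φ (Set.Ioi 0)) (hφp : ∀ t : ℝ, 0 < t → 0 < φ t)
    (T : EuclideanSpace ℝ (Fin n) ≃ₗ[ℝ] EuclideanSpace ℝ (Fin n))
    (hT : |LinearMap.det (T : EuclideanSpace ℝ (Fin n) →ₗ[ℝ] EuclideanSpace ℝ (Fin n))| = 1)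
    (K L K' L' : StarBody n)
    (hK : IsLinearImage T K K') (hL : IsLinearImage T L L') :
    dualMixedVolume φ K' L' = dualMixedVolume φ K L :=
  dual_mixed_volume_sl_invariant_general φ hφc T hT K L K' L' hK hL
end
end
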